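/- arXiv:2604.25870 — 4 statements merged into one kernel-verified Lean document; each statement's English description precedes it below -/
import Mathlib

section
/- Let q be a prime power, γ ∈ F_{q^2}^*, k ≥ 1, and let F(X) = a_0 + Σ_{i=1}^{k-1} a_i X^i + γ a_k X^k with a_0, a_k ∈ F_q, a_k ≠ 0, and a_1,…,a_{k-1} ∈ F_{q^2}. If F has k distinct roots λ_1,…,λ_k ∈ F_q^*, then γ^{q+1} is a nonzero square in F_q. -/
/-!
A polynomial of degree at most `k` vanishing at `k` distinct points `λⱼ` is its `X ^ k`-coefficient
times `∏ (X - λⱼ)`. Comparing constant terms gives `a₀ = γ aₖ ∏ (-λⱼ)`, so `γ` lies in `F_q`,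
and for `s ∈ F_q` we have `s ^ (q + 1) = s ^ 2`.
-/

open Polynomial

namespace Polynomial

variable {R : Type*} [CommRing R] [IsDomain R]

theorem eq_C_coeff_mul_prod_X_sub_C_of_eval_eq_zero {ι : Type*} [Fintype ι] {p : R[X]}
    (hp : p.natDegree ≤ Fintype.card ι) {v : ι → R} (hv : Function.Injective v)
    (hroot : ∀ i, p.eval (v i) = 0) :
    p = C (p.coeff (Fintype.card ι)) * ∏ i, (X - C (v i)) := by
  set n := Fintype.card ι
  set Q : R[X] := ∏ i, (X - C (v i))
  have hQ : Q.Monic := monic_prod_of_monic _ _ fun i _ => monic_X_sub_C (v i)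
  have hQdeg : Q.natDegree = n := by
    simp [Q, n, natDegree_prod_of_monic _ _ fun i _ => monic_X_sub_C (v i)]
  have hdeg : (p - C (p.coeff n) * Q).degree < n := by
    refine (degree_lt_iff_coeff_zero _ _).2 fun m hm => ?_
    rcases hm.lt_or_eq with hm | rfl
    · have hpm : p.coeff m = 0 := coeff_eq_zero_of_natDegree_lt (hp.trans_lt hm)
      have hQm : Q.coeff m = 0 := coeff_eq_zero_of_natDegree_lt (hQdeg ▸ hm)
      rw [coeff_sub, coeff_C_mul, hpm, hQm, mul_zero, sub_zero]
    · rw [coeff_sub, coeff_C_mul, ← hQdeg, hQ.coeff_natDegree, mul_one, hQdeg, sub_self]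
  refine sub_eq_zero.1 (eq_zero_of_degree_lt_of_eval_index_eq_zero Finset.univ hv.injOn
    (by simpa using hdeg) fun i _ => ?_)
  simp [hroot, Q, eval_prod, Finset.prod_eq_zero (Finset.mem_univ i)]

theorem coeff_zero_eq_coeff_mul_prod_neg_of_eval_eq_zero {ι : Type*} [Fintype ι] {p : R[X]}
    (hp : p.natDegree ≤ Fintype.card ι) {v : ι → R} (hv : Function.Injective v)
    (hroot : ∀ i, p.eval (v i) = 0) :
    p.coeff 0 = p.coeff (Fintype.card ι) * ∏ i, -v i := by
  conv_lhs => rw [eq_C_coeff_mul_prod_X_sub_C_of_eval_eq_zero hp hv hroot]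
  simp [coeff_zero_eq_eval_zero, eval_prod]

end Polynomial

theorem coeff_zero_eq_mul_prod_neg_of_sum_mul_pow_eq_zero {R : Type*} [CommRing R] [IsDomain R]
    {k : ℕ} (b : ℕ → R) {v : Fin k → R} (hv : Function.Injective v)
    (hroot : ∀ j, ∑ i ∈ Finset.range (k + 1), b i * v j ^ i = 0) :
    b 0 = b k * ∏ j, -v j := by
  set p : R[X] := ∑ i ∈ Finset.range (k + 1), C (b i) * X ^ i
  have hcoeff : ∀ m ≤ k, p.coeff m = b m := fun m hm => by
    simp [p, Nat.lt_succ_of_le hm]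
  have hdeg : p.natDegree ≤ k := by
    refine natDegree_sum_le_of_forall_le _ _ fun i hi => ?_
    exact (natDegree_C_mul_X_pow_le _ _).trans (Nat.lt_succ_iff.1 (Finset.mem_range.1 hi))
  have h := coeff_zero_eq_coeff_mul_prod_neg_of_eval_eq_zero (by simpa using hdeg) hv
    fun j => by simpa [p, eval_finsetSum] using hroot j
  rwa [Fintype.card_fin, hcoeff 0 k.zero_le, hcoeff k le_rfl] at h

theorem sum_range_succ_ite_mul_pow {R : Type*} [CommRing R] {k : ℕ} (hk : 1 ≤ k)
    (a₀ aₖ : R) (mid : ℕ → R) (x : R) :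
    ∑ i ∈ Finset.range (k + 1), (if i = 0 then a₀ else if i = k then aₖ else mid i) * x ^ i
      = a₀ + ∑ i ∈ Finset.Ico 1 k, mid i * x ^ i + aₖ * x ^ k := by
  rw [Finset.sum_range_succ, Finset.range_eq_Ico, Finset.sum_eq_sum_Ico_succ_bot (by omega)]
  congr 2
  · simp
  · refine Finset.sum_congr rfl fun i hi => ?_
    obtain ⟨h1, h2⟩ := Finset.mem_Ico.1 hi
    rw [if_neg (by omega), if_neg (by omega)]
  · simp [show k ≠ 0 by omega]

theorem FiniteField.pow_card_add_one {K : Type*} [GroupWithZero K] [Fintype K] (a : K) :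
    a ^ (Fintype.card K + 1) = a ^ 2 := by
  rw [pow_succ, FiniteField.pow_card, sq]

theorem stmt6_general (q : ℕ) (K L : Type*) [Field K] [Field L] [Fintype K] [Algebra K L]
    (hK : Fintype.card K = q)
    (γ : L) (hγ : γ ≠ 0) (k : ℕ) (hk : 1 ≤ k)
    (a0 ak : K) (hak : ak ≠ 0) (mid : ℕ → L)
    (lam : Fin k → L) (hinj : Function.Injective lam)
    (hlam : ∀ j, ∃ c : K, c ≠ 0 ∧ lam j = algebraMap K L c)
    (hroot : ∀ j, algebraMap K L a0 + (∑ i ∈ Finset.Ico 1 k, mid i * lam j ^ i)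
      + γ * algebraMap K L ak * lam j ^ k = 0) :
    ∃ s : K, s ≠ 0 ∧ algebraMap K L (s ^ 2) = γ ^ (q + 1) := by
  choose c hc hlamc using hlam
  have hvieta := coeff_zero_eq_mul_prod_neg_of_sum_mul_pow_eq_zero
    (fun i => if i = 0 then algebraMap K L a0 else if i = k then γ * algebraMap K L ak else mid i)
    hinj fun j => by rw [sum_range_succ_ite_mul_pow hk, hroot]
  set d : K := ak * ∏ j, -c j
  have hd : d ≠ 0 := mul_ne_zero hak (Finset.prod_ne_zero_iff.2 fun j _ => neg_ne_zero.2 (hc j))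
  have hγs : algebraMap K L (a0 / d) = γ := by
    rw [map_div₀, div_eq_iff ((_root_.map_ne_zero _).2 hd)]
    simpa [d, hlamc, mul_assoc, show k ≠ 0 by omega] using hvieta
  refine ⟨a0 / d, fun h => hγ (by rw [← hγs, h, map_zero]), ?_⟩
  rw [← hγs, ← map_pow, ← hK, FiniteField.pow_card_add_one]

/-- If a twisted polynomial a₀ + Σ aᵢXⁱ + γ a_k X^k (a₀,a_k ∈ F_q, a_k ≠ 0) has k
distinct roots in F_q^*, then γ^{q+1} is a nonzero square in F_q. -/
theorem stmt6 (q : ℕ) (K L : Type*) [Field K] [Field L] [Fintype K] [Fintype L] [Algebra K L]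
    (hK : Fintype.card K = q) (hL : Fintype.card L = q ^ 2)
    (γ : L) (hγ : γ ≠ 0) (k : ℕ) (hk : 1 ≤ k)
    (a0 ak : K) (hak : ak ≠ 0) (mid : ℕ → L)
    (lam : Fin k → L) (hinj : Function.Injective lam)
    (hlam : ∀ j, ∃ c : K, c ≠ 0 ∧ lam j = algebraMap K L c)
    (hroot : ∀ j, algebraMap K L a0 + (∑ i ∈ Finset.Ico 1 k, mid i * lam j ^ i)
      + γ * algebraMap K L ak * lam j ^ k = 0) :
    ∃ s : K, s ≠ 0 ∧ algebraMap K L (s ^ 2) = γ ^ (q + 1) :=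
  stmt6_general q K L hK γ hγ k hk a0 ak hak mid lam hinj hlam hroot
end

section
/- Let q be a prime power, let Λ ⊂ F_q^* be a set of ℓ distinct elements, 1 ≤ k ≤ ℓ-1, and γ ∈ F_{q^2}^* with γ^{q+1} not a nonzero square in F_q. Then every nonzero polynomial F(X) = a_0 + Σ_{i=1}^{k-1} a_i X^i + γ a_k X^k (with a_0, a_k ∈ F_q and a_1,…,a_{k-1} ∈ F_{q^2}) has at most k-1 roots in Λ; consequently its evaluation vector (F(λ))_{λ∈Λ} has Hamming weight at least ℓ - k + 1. -/
/-!
If `a_k ≠ 0` and `F` had `k` roots `λ_i ∈ F_q^*`, then `F = γ a_k ∏ (X - λ_i)`; comparing constant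
terms gives `a_0 = γ a_k ∏ (-λ_i)`, so `γ` would lie in `F_q^*` and `γ^{q+1} = γ^2` would be a
nonzero square. Otherwise `F` has degree `< k`. The weight bound counts the complementary set.
-/

open Polynomial Finset

section TwistedPoly

variable {R : Type*} [CommRing R]

-- The paper's `F` is `twistedPoly a₀ a (γ a_k) k`.
noncomputable def twistedPoly (A : R) (m : ℕ → R) (B : R) (k : ℕ) : R[X] :=
  C A + ∑ i ∈ Ico 1 k, C (m i) * X ^ i + C B * X ^ k

variable (A : R) (m : ℕ → R) (B : R) (k : ℕ)

theorem twistedPoly_eval (x : R) :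
    (twistedPoly A m B k).eval x = A + ∑ i ∈ Ico 1 k, m i * x ^ i + B * x ^ k := by
  simp [twistedPoly, eval_finsetSum]

theorem twistedPoly_coeff (j : ℕ) :
    (twistedPoly A m B k).coeff j =
      (if j = 0 then A else 0) + (if j ∈ Ico 1 k then m j else 0) + (if j = k then B else 0) := by
  simp only [twistedPoly, coeff_add, coeff_C, finsetSum_coeff, coeff_C_mul, coeff_X_pow,
    mul_ite, mul_one, mul_zero, sum_ite_eq]

theorem twistedPoly_natDegree_le : (twistedPoly A m B k).natDegree ≤ k := by
  refine natDegree_le_iff_coeff_eq_zero.2 fun j hj => ?_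
  rw [twistedPoly_coeff, if_neg (by omega), if_neg (by rw [mem_Ico]; omega), if_neg (by omega)]
  simp

variable {k}

theorem twistedPoly_coeff_zero (hk : k ≠ 0) : (twistedPoly A m B k).coeff 0 = A := by
  simp [twistedPoly_coeff, Ne.symm hk]

theorem twistedPoly_coeff_self (hk : k ≠ 0) : (twistedPoly A m B k).coeff k = B := by
  simp [twistedPoly_coeff, hk]

theorem twistedPoly_coeff_of_mem_Ico {i : ℕ} (hi : i ∈ Ico 1 k) :
    (twistedPoly A m B k).coeff i = m i := by
  rw [mem_Ico] at hi
  simp [twistedPoly_coeff, show i ≠ 0 by omega, show i ≠ k by omega, hi]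

theorem twistedPoly_eq_zero_iff (hk : k ≠ 0) :
    twistedPoly A m B k = 0 ↔ A = 0 ∧ B = 0 ∧ ∀ i ∈ Ico 1 k, m i = 0 := by
  refine ⟨fun h => ⟨?_, ?_, fun i hi => ?_⟩, fun ⟨hA, hB, hm⟩ => ?_⟩
  · simpa [h] using (twistedPoly_coeff_zero A m B hk).symm
  · simpa [h] using (twistedPoly_coeff_self A m B hk).symm
  · simpa [h] using (twistedPoly_coeff_of_mem_Ico A m B hi).symm
  · rw [twistedPoly, sum_eq_zero fun i hi => by rw [hm i hi, C_0, zero_mul]]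
    simp [hA, hB]

end TwistedPoly

section RootsInSubfield

variable {L : Type*} [Field L] {F : Subfield L}

theorem Subfield.mul_eq_zero_of_mul_mem {x y : L} (hx : x ∉ F) (hy : y ∈ F) (hxy : x * y ∈ F) :
    x * y = 0 := by
  by_contra h
  exact hx (by simpa [right_ne_zero_of_mul h] using F.mul_mem hxy (F.inv_mem hy))

theorem Polynomial.leadingCoeff_mem_of_card_roots_eq {p : L[X]} {S : Finset L} (hp : p ≠ 0)
    (hroots : ∀ x ∈ S, p.IsRoot x) (hcard : #S = p.natDegree) (hSF : ∀ x ∈ S, x ∈ F)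
    (hS0 : 0 ∉ S) (h0 : p.coeff 0 ∈ F) : p.leadingCoeff ∈ F := by
  have hrootsS : p.roots = S.val :=
    (Multiset.eq_of_le_of_card_le
      (S.val_le_iff_val_subset.2 fun x hx => (mem_roots hp).2 (hroots x hx))
      ((card_roots' p).trans hcard.ge)).symm
  have hsplit : p.Splits := splits_iff_card_roots.2 (by rw [hrootsS]; exact hcard)
  have hprod : (-1) ^ p.natDegree * ∏ x ∈ S, x ≠ 0 :=
    mul_ne_zero (by simp) (prod_ne_zero_iff.2 fun x hx h => hS0 (h ▸ hx))
  have hcoeff : p.coeff 0 = p.leadingCoeff * ((-1) ^ p.natDegree * ∏ x ∈ S, x) := by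
    rw [hsplit.coeff_zero_eq_leadingCoeff_mul_prod_roots, hrootsS, prod_val]
    simp only [id]
    ring
  rw [eq_div_of_mul_eq hprod hcoeff.symm]
  exact F.div_mem h0 (F.mul_mem (F.pow_mem (F.neg_mem F.one_mem) _) (F.prod_mem hSF))

open scoped Classical in
theorem Polynomial.card_filter_isRoot_le_pred {p : L[X]} {k : ℕ} {Λ : Finset L} (hp : p ≠ 0)
    (hdeg : p.natDegree ≤ k) (h0 : p.coeff 0 ∈ F) (hk : p.coeff k ∈ F → p.coeff k = 0)
    (hΛF : ∀ x ∈ Λ, x ∈ F) (hΛ0 : 0 ∉ Λ) : #{x ∈ Λ | p.IsRoot x} ≤ k - 1 := by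
  have hle : #{x ∈ Λ | p.IsRoot x} ≤ p.natDegree :=
    card_le_degree_of_subset_roots fun x hx => (mem_roots hp).2 (mem_filter.1 hx).2
  rcases hdeg.lt_or_eq with hlt | heq
  · omega
  by_contra! hcon
  have hlc := leadingCoeff_mem_of_card_roots_eq (S := {x ∈ Λ | p.IsRoot x}) hp
    (fun x hx => (mem_filter.1 hx).2) (by omega) (fun x hx => hΛF x (mem_filter.1 hx).1)
    (fun h => hΛ0 (mem_filter.1 h).1) h0
  rw [leadingCoeff, heq] at hlc
  exact hp (leadingCoeff_eq_zero.1 (by rw [leadingCoeff, heq]; exact hk hlc))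

end RootsInSubfield

theorem notMem_fieldRange_of_not_sq_eq_pow_card_add_one {K L : Type*} [Field K] [Fintype K]
    [Field L] [Algebra K L] {γ : L} (hγ : γ ≠ 0)
    (hns : ¬ ∃ s : K, s ≠ 0 ∧ algebraMap K L (s ^ 2) = γ ^ (Fintype.card K + 1)) :
    γ ∉ (algebraMap K L).fieldRange := by
  rintro ⟨b, rfl⟩
  refine hns ⟨b, by simpa using hγ, ?_⟩
  rw [pow_succ _ (Fintype.card K), ← map_pow, FiniteField.pow_card, ← map_mul, sq]

open scoped Classical in
theorem stmt7_general (q : ℕ) (K L : Type*) [Field K] [Field L] [Fintype K] [Algebra K L]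
    (hK : Fintype.card K = q)
    (Λ : Finset L) (ℓ k : ℕ) (hΛcard : Λ.card = ℓ)
    (hΛ : ∀ x ∈ Λ, ∃ c : K, c ≠ 0 ∧ x = algebraMap K L c)
    (hk : 1 ≤ k) (hkℓ : k ≤ ℓ - 1)
    (γ : L) (hγ : γ ≠ 0)
    (hns : ¬ ∃ s : K, s ≠ 0 ∧ algebraMap K L (s ^ 2) = γ ^ (q + 1))
    (a0 ak : K) (mid : ℕ → L)
    (hne : ¬ (a0 = 0 ∧ ak = 0 ∧ ∀ i ∈ Finset.Ico 1 k, mid i = 0)) :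
    (Λ.filter (fun x => algebraMap K L a0 + (∑ i ∈ Finset.Ico 1 k, mid i * x ^ i)
        + γ * algebraMap K L ak * x ^ k = 0)).card ≤ k - 1 ∧
    ℓ - k + 1 ≤ (Λ.filter (fun x => algebraMap K L a0 + (∑ i ∈ Finset.Ico 1 k, mid i * x ^ i)
        + γ * algebraMap K L ak * x ^ k ≠ 0)).card := by
  subst hK
  have hk0 : k ≠ 0 := by omega
  let F := (algebraMap K L).fieldRange
  have hγF : γ ∉ F := notMem_fieldRange_of_not_sq_eq_pow_card_add_one hγ hns
  set p := twistedPoly (algebraMap K L a0) mid (γ * algebraMap K L ak) k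
  have hp : p ≠ 0 := by
    rw [Ne, twistedPoly_eq_zero_iff _ _ _ hk0, mul_eq_zero, map_eq_zero, map_eq_zero]
    simpa [hγ] using hne
  have hroots : #{x ∈ Λ | p.IsRoot x} ≤ k - 1 := by
    refine card_filter_isRoot_le_pred (F := F) hp (twistedPoly_natDegree_le _ _ _ _) ?_
      (fun h => ?_) (fun x hx => ?_) (fun h => ?_)
    · rw [twistedPoly_coeff_zero _ _ _ hk0]
      exact RingHom.mem_fieldRange_self _ a0
    · rw [twistedPoly_coeff_self _ _ _ hk0] at h ⊢
      exact Subfield.mul_eq_zero_of_mul_mem hγF (RingHom.mem_fieldRange_self _ ak) h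
    · obtain ⟨c, -, rfl⟩ := hΛ x hx
      exact RingHom.mem_fieldRange_self _ c
    · obtain ⟨c, hc, hc0⟩ := hΛ 0 h
      exact hc (by simpa using hc0.symm)
  have hsplit := Λ.card_filter_add_card_filter_not p.IsRoot
  simp only [IsRoot.def, p, twistedPoly_eval] at hroots hsplit
  refine ⟨hroots, ?_⟩
  simp only [ne_eq]
  omega

open scoped Classical in
/-- If γ^{q+1} is not a nonzero square of F_q, every nonzero twisted polynomial has at
most k-1 roots in Λ, so its evaluation vector has Hamming weight ≥ ℓ - k + 1. -/
theorem stmt7 (q : ℕ) (K L : Type*) [Field K] [Field L] [Fintype K] [Fintype L] [Algebra K L]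
    (hK : Fintype.card K = q) (hL : Fintype.card L = q ^ 2)
    (Λ : Finset L) (ℓ k : ℕ) (hΛcard : Λ.card = ℓ)
    (hΛ : ∀ x ∈ Λ, ∃ c : K, c ≠ 0 ∧ x = algebraMap K L c)
    (hk : 1 ≤ k) (hkℓ : k ≤ ℓ - 1)
    (γ : L) (hγ : γ ≠ 0)
    (hns : ¬ ∃ s : K, s ≠ 0 ∧ algebraMap K L (s ^ 2) = γ ^ (q + 1))
    (a0 ak : K) (mid : ℕ → L)
    (hne : ¬ (a0 = 0 ∧ ak = 0 ∧ ∀ i ∈ Finset.Ico 1 k, mid i = 0)) :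
    (Λ.filter (fun x => algebraMap K L a0 + (∑ i ∈ Finset.Ico 1 k, mid i * x ^ i)
        + γ * algebraMap K L ak * x ^ k = 0)).card ≤ k - 1 ∧
    ℓ - k + 1 ≤ (Λ.filter (fun x => algebraMap K L a0 + (∑ i ∈ Finset.Ico 1 k, mid i * x ^ i)
        + γ * algebraMap K L ak * x ^ k ≠ 0)).card :=
  stmt7_general q K L hK Λ ℓ k hΛcard hΛ hk hkℓ γ hγ hns a0 ak mid hne
end

section
/- Let K = F_q, L = F_{q^r}, {β_1,…,β_r} a K-basis of L, k ≥ 1, η ∈ L^* and 0 ≤ h ≤ r-1. The Gram matrix G of the twisted linearized Reed–Solomon code L_k^θ(η,h) with respect to the basis {β_t X^j : 1 ≤ j ≤ k-1, 1 ≤ t ≤ r} ∪ {β_t + η θ^h(β_t) X^k : 1 ≤ t ≤ r} and the coefficientwise trace form ⟨F,G⟩ = Tr_{L/K}(Σ_i f_i g_i) is block diagonal, equal to diag(I_{k-1} ⊗ M, B), where M_{t,u} = Tr_{L/K}(β_t β_u) and B_{t,u} = Tr_{L/K}(θ^{-h}(1+η^2) β_t β_u). Consequently det(G) = (det M)^{k-1}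 · det(B). -/
/-!
Each basis vector is supported on at most two monomials: `β_t X^(j+1)` on degree
`j + 1 ∈ [1, k-1]`, and `β_t + η θ^h(β_t) X^k` on degrees `0` and `k`. Pairing against a vector
therefore just evaluates the other vector at those degrees, so vectors with disjoint supports are
orthogonal and the Gram matrix is block diagonal. On the last block the pairing is
`Tr(β_t β_u) + Tr(η² θ^h(β_t β_u))`, and invariance of the trace under `θ^h` turns the second term
into `Tr(θ^{-h}(η²) β_t β_u)`.
-/

open Finset

theorem Algebra.trace_mul_algEquiv_apply {A B : Type*} [CommRing A] [CommRing B] [Algebra A B]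
    (σ : B ≃ₐ[A] B) (a x : B) :
    Algebra.trace A B (a * σ x) = Algebra.trace A B (σ.symm a * x) := by
  conv_rhs => rw [← Algebra.trace_eq_of_algEquiv σ, map_mul, AlgEquiv.apply_symm_apply]

theorem Finset.sum_range_ite_eq_mul {R : Type*} [NonUnitalNonAssocSemiring R] {N a : ℕ}
    (ha : a < N) (x : R) (g : ℕ → R) :
    ∑ d ∈ range N, (if d = a then x else 0) * g d = x * g a := by
  simp [ite_mul, ha]

namespace TwistedGram

variable {L : Type*} [CommRing L] {r k N : ℕ} {w c : Fin r → L}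
  {v : (Fin (k - 1) × Fin r) ⊕ Fin r → ℕ → L}

theorem trace_add_twist_mul_twist {K : Type*} [CommRing K] [Algebra K L] (σ : L ≃ₐ[K] L)
    (η x y : L) :
    Algebra.trace K L (x * y + η * σ x * (η * σ y)) =
      Algebra.trace K L (σ.symm (1 + η ^ 2) * (x * y)) := by
  have hsplit : σ.symm (1 + η ^ 2) * (x * y) = x * y + σ.symm (η ^ 2) * (x * y) := by
    rw [map_add, map_one]; ring
  rw [hsplit, map_add, map_add, ← Algebra.trace_mul_algEquiv_apply, map_mul σ]
  congr 2; ring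

section Low

variable (hv1 : ∀ j t d, v (Sum.inl (j, t)) d = if d = (j : ℕ) + 1 then w t else 0)
include hv1

theorem sum_inl_mul (hkN : k < N) (j : Fin (k - 1)) (t : Fin r) (g : ℕ → L) :
    ∑ d ∈ range N, v (Sum.inl (j, t)) d * g d = w t * g (j + 1) := by
  simp only [hv1]
  exact sum_range_ite_eq_mul (by omega) _ _

theorem inl_apply_zero (j : Fin (k - 1)) (t : Fin r) : v (Sum.inl (j, t)) 0 = 0 := by
  simp [hv1]

theorem inl_apply_self (j : Fin (k - 1)) (t : Fin r) : v (Sum.inl (j, t)) k = 0 := by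
  rw [hv1, if_neg (by omega)]

end Low

section High

variable (hv2 : ∀ t d, v (Sum.inr t) d = if d = 0 then w t else if d = k then c t else 0)
include hv2

theorem sum_inr_mul (hk : k ≠ 0) (hkN : k < N) (t : Fin r) (g : ℕ → L) :
    ∑ d ∈ range N, v (Sum.inr t) d * g d = w t * g 0 + c t * g k := by
  have hsplit : ∀ d,
      v (Sum.inr t) d = (if d = 0 then w t else 0) + (if d = k then c t else 0) := by
    intro d
    rw [hv2]
    split_ifs <;> first | omega | simp
  simp only [hsplit, add_mul, sum_add_distrib]
  rw [sum_range_ite_eq_mul (by omega), sum_range_ite_eq_mul hkN]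

theorem inr_apply_succ (j : Fin (k - 1)) (t : Fin r) : v (Sum.inr t) (j + 1) = 0 := by
  rw [hv2, if_neg (by omega), if_neg (by omega)]

end High

end TwistedGram

open TwistedGram in
theorem stmt12_general (r ℓ k h : ℕ)
    (K L : Type*) [Field K] [Field L] [Algebra K L]
    (θ : L ≃ₐ[K] L)
    (b : Module.Basis (Fin r) K L) (η : L)
    (hk1 : 1 ≤ k) (hk2 : k < ℓ * r)
    (v : (Fin (k - 1) × Fin r) ⊕ Fin r → ℕ → L)
    (hv1 : ∀ j t d, v (Sum.inl (j, t)) d = if d = (j : ℕ) + 1 then b t else 0)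
    (hv2 : ∀ t d, v (Sum.inr t) d =
      if d = 0 then b t else if d = k then η * (θ ^ h) (b t) else 0)
    (M B : Matrix (Fin r) (Fin r) K)
    (hM : ∀ t u, M t u = Algebra.trace K L (b t * b u))
    (hB : ∀ t u, B t u = Algebra.trace K L ((θ ^ h).symm (1 + η ^ 2) * (b t * b u)))
    (G : Matrix ((Fin (k - 1) × Fin r) ⊕ Fin r) ((Fin (k - 1) × Fin r) ⊕ Fin r) K)
    (hG : ∀ i i', G i i' = Algebra.trace K L (∑ d ∈ Finset.range (ℓ * r), v i d * v i' d)) :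
    G = Matrix.fromBlocks
        (Matrix.kroneckerMap (· * ·) (1 : Matrix (Fin (k - 1)) (Fin (k - 1)) K) M) 0 0 B ∧
    G.det = M.det ^ (k - 1) * B.det := by
  have hk : k ≠ 0 := by omega
  have hblocks : G = Matrix.fromBlocks
      (Matrix.kroneckerMap (· * ·) (1 : Matrix (Fin (k - 1)) (Fin (k - 1)) K) M) 0 0 B := by
    ext (⟨j, t⟩ | t) (⟨j', u⟩ | u)
    · rw [hG, sum_inl_mul hv1 hk2, hv1]
      by_cases hj : j = j'
      · simp [hj, hM]
      · simp [hj, Fin.val_inj]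
    · simp [hG, sum_inl_mul hv1 hk2, inr_apply_succ hv2]
    · simp [hG, sum_inr_mul hv2 hk hk2, inl_apply_zero hv1, inl_apply_self hv1]
    · rw [hG, sum_inr_mul hv2 hk hk2, hv2, hv2, if_pos rfl, if_neg hk, if_pos rfl,
        Matrix.fromBlocks_apply₂₂, hB, trace_add_twist_mul_twist]
  refine ⟨hblocks, ?_⟩
  rw [hblocks, Matrix.det_fromBlocks_zero₂₁, Matrix.det_kronecker]
  simp

/-- The Gram matrix of the TLRS code w.r.t. the natural basis is block diagonal,
diag(I_{k-1} ⊗ M, B), with B_{t,u} = Tr(θ^{-h}(1+η²) β_t β_u); hence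
det G = (det M)^{k-1} · det B. -/
theorem stmt12 (q r ℓ k h : ℕ)
    (K L : Type*) [Field K] [Field L] [Fintype K] [Fintype L] [Algebra K L]
    (hK : Fintype.card K = q) (hL : Fintype.card L = q ^ r)
    (θ : L ≃ₐ[K] L) (hθ : ∀ x : L, θ x = x ^ q)
    (b : Module.Basis (Fin r) K L) (η : L) (hη : η ≠ 0)
    (hk1 : 1 ≤ k) (hk2 : k < ℓ * r) (hh : h ≤ r - 1)
    (v : (Fin (k - 1) × Fin r) ⊕ Fin r → ℕ → L)
    (hv1 : ∀ j t d, v (Sum.inl (j, t)) d = if d = (j : ℕ) + 1 then b t else 0)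
    (hv2 : ∀ t d, v (Sum.inr t) d =
      if d = 0 then b t else if d = k then η * (θ ^ h) (b t) else 0)
    (M B : Matrix (Fin r) (Fin r) K)
    (hM : ∀ t u, M t u = Algebra.trace K L (b t * b u))
    (hB : ∀ t u, B t u = Algebra.trace K L ((θ ^ h).symm (1 + η ^ 2) * (b t * b u)))
    (G : Matrix ((Fin (k - 1) × Fin r) ⊕ Fin r) ((Fin (k - 1) × Fin r) ⊕ Fin r) K)
    (hG : ∀ i i', G i i' = Algebra.trace K L (∑ d ∈ Finset.range (ℓ * r), v i d * v i' d)) :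
    G = Matrix.fromBlocks
        (Matrix.kroneckerMap (· * ·) (1 : Matrix (Fin (k - 1)) (Fin (k - 1)) K) M) 0 0 B ∧
    G.det = M.det ^ (k - 1) * B.det :=
  stmt12_general r ℓ k h K L θ b η hk1 hk2 v hv1 hv2 M B hM hB G hG
end

section
/- Let K = F_q, L = F_{q^r}, 1 ≤ k ≤ ℓr - 1, 0 ≤ h ≤ r-1, η ∈ L^*. The twisted linearized Reed–Solomon code C = { f_0 + f_1 X + ⋯ + f_{k-1} X^{k-1} + η θ^h(f_0) X^k : f_i ∈ L }, viewed as a K-subspace of the space of polynomials of degree < ℓr equipped with the K-bilinear form ⟨F,G⟩ = Tr_{L/K}(Σ_i f_i g_i), satisfies C ∩ C^⊥ = {0} if and only if 1 + η^2 ≠ 0 in L. -/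
/-! A codeword is `(f_0, …, f_{k-1}, η σ(f_0), 0, …)` with `σ = θ^h`, so the pairing of two
codewords is `Tr(Σ_{i<k} g_i f_i + η² σ(g_0 f_0))`. As `Tr ∘ σ = Tr`, the last term may be replaced
by `σ⁻¹(η²) g_0 f_0`: on messages, the form is the trace form of `L` weighted by
`1 + σ⁻¹(η²) = σ⁻¹(1 + η²)` in position `0` and by `1` elsewhere. The trace form being
nondegenerate, this is nondegenerate exactly when `1 + η² ≠ 0`; otherwise the codeword of the
message `(1, 0, …, 0)` is orthogonal to the whole code. -/

open Finset

section TraceForm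

variable {K L : Type*} [Field K] [Field L] [Algebra K L]

theorem Algebra.trace_mul_algEquiv_apply_s13 (σ : L ≃ₐ[K] L) (c x : L) :
    Algebra.trace K L (c * σ x) = Algebra.trace K L (σ.symm c * x) := by
  rw [← Algebra.trace_eq_of_algEquiv σ (σ.symm c * x), map_mul σ, AlgEquiv.apply_symm_apply]

theorem eq_zero_of_forall_trace_sum_mul_eq_zero [FiniteDimensional K L] [Algebra.IsSeparable K L]
    {ι : Type*} [DecidableEq ι] {s : Finset ι} {a : ι → L}
    (h : ∀ g : ι → L, Algebra.trace K L (∑ i ∈ s, g i * a i) = 0) {j : ι} (hj : j ∈ s) :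
    a j = 0 := by
  refine (traceForm_nondegenerate K L).1 (a j) fun y => ?_
  have := h (Pi.single j y)
  rwa [sum_eq_single_of_mem j hj fun i _ hi => by simp [hi], Pi.single_eq_same, mul_comm] at this

end TraceForm

section TwistedWord

variable {K L : Type*} [Field K] [Field L] [Algebra K L] {n k : ℕ} {η : L} {σ : L ≃ₐ[K] L}

def twistedWord (n k : ℕ) (η : L) (σ : L ≃ₐ[K] L) (f : ℕ → L) : Fin n → L := fun d =>
  if (d : ℕ) < k then f d else if (d : ℕ) = k then η * σ (f 0) else 0

@[simp]
theorem twistedWord_zero : twistedWord n k η σ 0 = 0 := by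
  funext d
  simp [twistedWord]

theorem twistedWord_eq_zero_iff (hk : 0 < k) (hkn : k ≤ n) (f : ℕ → L) :
    twistedWord n k η σ f = 0 ↔ ∀ i < k, f i = 0 := by
  constructor
  · intro hf i hi
    simpa [twistedWord, hi] using congr_fun hf ⟨i, hi.trans_le hkn⟩
  · intro hf
    funext d
    simpa [twistedWord, hf 0 hk] using hf d

theorem sum_twistedWord_mul_twistedWord (hkn : k < n) (f g : ℕ → L) :
    ∑ d, twistedWord n k η σ g d * twistedWord n k η σ f d =
      ∑ i ∈ range k, g i * f i + η ^ 2 * σ (g 0 * f 0) := by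
  obtain ⟨m, rfl⟩ := Nat.exists_eq_add_of_le hkn
  unfold twistedWord
  rw [Fin.sum_univ_eq_sum_range
      (fun i => (if i < k then g i else if i = k then η * σ (g 0) else 0) *
        (if i < k then f i else if i = k then η * σ (f 0) else 0)),
    sum_range_add, sum_range_succ]
  rw [sum_congr rfl fun i hi => by rw [if_pos (mem_range.1 hi), if_pos (mem_range.1 hi)],
    sum_eq_zero (s := range m) fun x _ => by rw [if_neg (by omega), if_neg (by omega), zero_mul]]
  simp only [lt_irrefl, if_false, if_true, map_mul, add_zero]
  ring

theorem trace_sum_twistedWord_mul_twistedWord (hk : 0 < k) (hkn : k < n) (f g : ℕ → L) :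
    Algebra.trace K L (∑ d, twistedWord n k η σ g d * twistedWord n k η σ f d) =
      Algebra.trace K L
        (∑ i ∈ range k, g i * (f i + if i = 0 then σ.symm (η ^ 2) * f 0 else 0)) := by
  rw [sum_twistedWord_mul_twistedWord hkn, map_add, Algebra.trace_mul_algEquiv_apply_s13]
  simp only [mul_add, sum_add_distrib, mul_ite, mul_zero, sum_ite_eq', mem_range, if_pos hk,
    map_add]
  ring_nf

theorem forall_trace_sum_twistedWord_mul_eq_zero_iff [FiniteDimensional K L]
    [Algebra.IsSeparable K L] (hk : 0 < k) (hkn : k < n) (f : ℕ → L) :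
    (∀ g, Algebra.trace K L (∑ d, twistedWord n k η σ g d * twistedWord n k η σ f d) = 0) ↔
      (1 + σ.symm (η ^ 2)) * f 0 = 0 ∧ ∀ i, 0 < i → i < k → f i = 0 := by
  simp_rw [trace_sum_twistedWord_mul_twistedWord hk hkn]
  constructor
  · intro h
    have hcoeff (i : ℕ) (hi : i < k) := eq_zero_of_forall_trace_sum_mul_eq_zero h (mem_range.2 hi)
    exact ⟨by simpa [add_mul, add_comm] using hcoeff 0 hk,
      fun i hi0 hi => by simpa [hi0.ne'] using hcoeff i hi⟩
  · rintro ⟨h0, hpos⟩ g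
    rw [sum_eq_zero fun i hi => ?_, map_zero]
    rcases Nat.eq_zero_or_pos i with rfl | hi0
    · rw [if_pos rfl, ← one_add_mul, h0, mul_zero]
    · simp [hi0.ne', hpos i hi0 (mem_range.1 hi)]

theorem forall_orthogonal_twistedWord_eq_zero_iff [FiniteDimensional K L]
    [Algebra.IsSeparable K L] (hk : 0 < k) (hkn : k < n) :
    (∀ f, (∀ g, Algebra.trace K L (∑ d, twistedWord n k η σ g d * twistedWord n k η σ f d) = 0) →
      twistedWord n k η σ f = 0) ↔ 1 + η ^ 2 ≠ 0 := by
  have hweight : 1 + σ.symm (η ^ 2) = σ.symm (1 + η ^ 2) := by rw [map_add, map_one]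
  simp_rw [forall_trace_sum_twistedWord_mul_eq_zero_iff hk hkn, twistedWord_eq_zero_iff hk hkn.le,
    hweight]
  constructor
  · intro h hη2
    have hsingle := h (Pi.single 0 1)
      ⟨by rw [hη2, map_zero, zero_mul], fun i hi _ => by simp [hi.ne']⟩ 0 hk
    simp at hsingle
  · rintro hη2 f ⟨h0, hpos⟩ i hi
    rcases Nat.eq_zero_or_pos i with rfl | hi0
    · exact (mul_eq_zero.1 h0).resolve_left ((map_ne_zero_iff _ σ.symm.injective).2 hη2)
    · exact hpos i hi0 hi

end TwistedWord

theorem stmt13_general (r ℓ k h : ℕ)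
    (K L : Type*) [Field K] [Field L] [Fintype L] [Algebra K L]
    (θ : L ≃ₐ[K] L)
    (η : L)
    (hk1 : 1 ≤ k) (hk2 : k < ℓ * r) :
    let C : Set (Fin (ℓ * r) → L) := {F | ∃ f : ℕ → L, ∀ d : Fin (ℓ * r),
      F d = if (d : ℕ) < k then f (d : ℕ)
            else if (d : ℕ) = k then η * (θ ^ h) (f 0) else 0}
    let Cperp : Set (Fin (ℓ * r) → L) :=
      {G | ∀ F ∈ C, Algebra.trace K L (∑ d, F d * G d) = 0}
    C ∩ Cperp = {0} ↔ 1 + η ^ 2 ≠ 0 := by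
  intro C Cperp
  have : FiniteDimensional K L := .of_finite
  have hC : C = Set.range (twistedWord (ℓ * r) k η (θ ^ h)) := by
    ext F
    exact ⟨fun ⟨f, hf⟩ => ⟨f, (funext hf).symm⟩, fun ⟨f, hf⟩ => ⟨f, fun d => hf ▸ rfl⟩⟩
  have hzero : (0 : Fin (ℓ * r) → L) ∈ C ∩ Cperp :=
    ⟨hC ▸ ⟨0, twistedWord_zero⟩, fun F _ => by simp⟩
  rw [Set.eq_singleton_iff_unique_mem, and_iff_right hzero,
    ← forall_orthogonal_twistedWord_eq_zero_iff (σ := θ ^ h) hk1 hk2]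
  simp [Cperp, hC]

/-- LCD characterization: the TLRS code C satisfies C ∩ C^⊥ = {0} iff 1 + η² ≠ 0. -/
theorem stmt13 (q r ℓ k h : ℕ)
    (K L : Type*) [Field K] [Field L] [Fintype K] [Fintype L] [Algebra K L]
    (hK : Fintype.card K = q) (hL : Fintype.card L = q ^ r)
    (θ : L ≃ₐ[K] L) (hθ : ∀ x : L, θ x = x ^ q)
    (η : L) (hη : η ≠ 0)
    (hk1 : 1 ≤ k) (hk2 : k < ℓ * r) (hh : h ≤ r - 1) :
    let C : Set (Fin (ℓ * r) → L) := {F | ∃ f : ℕ → L, ∀ d : Fin (ℓ * r),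
      F d = if (d : ℕ) < k then f (d : ℕ)
            else if (d : ℕ) = k then η * (θ ^ h) (f 0) else 0}
    let Cperp : Set (Fin (ℓ * r) → L) :=
      {G | ∀ F ∈ C, Algebra.trace K L (∑ d, F d * G d) = 0}
    C ∩ Cperp = {0} ↔ 1 + η ^ 2 ≠ 0 :=
  stmt13_general r ℓ k h K L θ η hk1 hk2
end
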